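/- Let G = (V, E) be a finite acyclic digraph and let (V1, E1), (V2, E2) be a separation of G along a pair {u, v} of distinct vertices. Assume that u dominates v in G. Define H2* = (V2, E2 ∪ {(u, v)}) if v has at least one incoming edge in E1, and H2* = (V2, E2) otherwise. Then for all vertices x, y ∈ V2, x dominates y in H2* if and only if x dominates y in G. -/

import Mathlib

/-- `x` dominates `y` in the digraph with edge set `E`: there is a directed
path with at least one edge from `x` to `y`. -/
def Dominates {α : Type*} (E : Finset (α × α)) (x y : α) : Prop :=
  Relation.TransGen (fun a b => (a, b) ∈ E) x y

/-- A separation of the finite digraph `(V, E)` along the pair `{u, v}` of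
distinct vertices into `H1 = (V1, E1)` and `H2 = (V2, E2)`. -/
structure Separation {α : Type*} [DecidableEq α] (V : Finset α) (E : Finset (α × α))
    (u v : α) (V1 V2 : Finset α) (E1 E2 : Finset (α × α)) : Prop where
  ne : u ≠ v
  vUnion : V1 ∪ V2 = V
  vInter : V1 ∩ V2 = {u, v}
  eDisjoint : Disjoint E1 E2
  eUnion : E1 ∪ E2 = E
  mem1 : ∀ e ∈ E1, e.1 ∈ V1 ∧ e.2 ∈ V1
  mem2 : ∀ e ∈ E2, e.1 ∈ V2 ∧ e.2 ∈ V2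

/-!
Cut a walk of `G` between two vertices of `V2` at its visits to `V2`: what remains are
edges of `E2` and walks in `H1` between vertices of `V1 ∩ V2 = {u, v}`. By acyclicity such
a walk in `H1` must go from `u` to `v`, and it ends with an edge of `E1` into `v`, so the
marker edge `(u, v)` is present in `H2*` and can replace it. Conversely every edge of `H2*`
is a dominance in `G`, the marker edge because `u` dominates `v`.
-/

namespace Relation

variable {α : Type*} {r s : α → α → Prop} {P : α → Prop}

theorem TransGen.of_sup_segments (hs : ∀ a b, s a b → P a ∧ P b) {x y : α}
    (hx : P x) (hy : P y) (h : TransGen (fun a b => r a b ∨ s a b) x y) :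
    TransGen (fun a b => s a b ∨ P a ∧ P b ∧ TransGen r a b) x y := by
  set T : α → α → Prop := fun a b => s a b ∨ P a ∧ P b ∧ TransGen r a b
  have start_mem : ∀ {a}, TransGen T a y → P a := fun hay => by
    obtain ⟨b, hab | ⟨ha, -⟩, -⟩ := TransGen.head'_iff.mp hay
    exacts [(hs _ _ hab).1, ha]
  -- Invariant along the walk: `a` either reaches `y` in `T` already, or is inside an
  -- `r`-segment that ends at a `P`-vertex `c` from which `T` continues to `y`.
  suffices ∀ a, TransGen (fun a b => r a b ∨ s a b) a y →
      TransGen T a y ∨ ∃ c, P c ∧ TransGen r a c ∧ ReflTransGen T c y by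
    obtain hxy | ⟨c, hc, hxc, hcy⟩ := this x h
    exacts [hxy, TransGen.head' (Or.inr ⟨hx, hc, hxc⟩) hcy]
  intro a hay
  induction hay using TransGen.head_induction_on with
  | single hab =>
    obtain hab | hab := hab
    exacts [Or.inr ⟨_, hy, .single hab, .refl⟩, Or.inl (.single (Or.inl hab))]
  | @head a b hab _ ih =>
    obtain hab | hab := hab
    · obtain hby | ⟨c, hc, hbc, hcy⟩ := ih
      exacts [Or.inr ⟨b, start_mem hby, .single hab, hby.to_reflTransGen⟩,
        Or.inr ⟨c, hc, hbc.head hab, hcy⟩]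
    · have hT : ReflTransGen T b y := by
        obtain hby | ⟨c, hc, hbc, hcy⟩ := ih
        exacts [hby.to_reflTransGen, ReflTransGen.head (Or.inr ⟨(hs _ _ hab).2, hc, hbc⟩) hcy]
      exact Or.inl (TransGen.head' (Or.inl hab) hT)

end Relation

namespace Dominates

variable {α : Type*} {E E' : Finset (α × α)} {x y : α}

theorem mono (hE : E ⊆ E') (h : Dominates E x y) : Dominates E' x y :=
  Relation.TransGen.mono (fun _ _ hab => hE hab) _ _ h

theorem of_forall_edge (hE : ∀ a b, (a, b) ∈ E → Dominates E' a b) (h : Dominates E x y) :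
    Dominates E' x y :=
  Relation.TransGen.closed hE _ _ h

theorem exists_edge_into (h : Dominates E x y) : ∃ e ∈ E, e.2 = y := by
  obtain ⟨b, -, hby⟩ := Relation.TransGen.tail'_iff.mp h
  exact ⟨(b, y), hby, rfl⟩

theorem mem_of_forall_edge {V : Set α} (hE : ∀ e ∈ E, e.1 ∈ V ∧ e.2 ∈ V)
    (h : Dominates E x y) : x ∈ V ∧ y ∈ V := by
  obtain ⟨b, hxb, -⟩ := Relation.TransGen.head'_iff.mp h
  obtain ⟨c, -, hcy⟩ := Relation.TransGen.tail'_iff.mp h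
  exact ⟨(hE _ hxb).1, (hE _ hcy).2⟩

end Dominates

namespace Separation

variable {α : Type*} [DecidableEq α] {V V1 V2 : Finset α} {E E1 E2 : Finset (α × α)} {u v : α}

theorem eq_or_eq_of_mem_of_mem (hsep : Separation V E u v V1 V2 E1 E2) {a : α}
    (h1 : a ∈ V1) (h2 : a ∈ V2) : a = u ∨ a = v := by
  have : a ∈ V1 ∩ V2 := Finset.mem_inter.mpr ⟨h1, h2⟩
  simpa [hsep.vInter] using this

theorem mem_union_iff (hsep : Separation V E u v V1 V2 E1 E2) {e : α × α} :
    e ∈ E ↔ e ∈ E1 ∨ e ∈ E2 := by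
  rw [← hsep.eUnion, Finset.mem_union]

theorem eq_of_dominates_left_edges (hsep : Separation V E u v V1 V2 E1 E2)
    (hacyc : ∀ x : α, ¬ Dominates E x x) (hdom : Dominates E u v) {a b : α}
    (ha : a ∈ V2) (hb : b ∈ V2) (hab : Dominates E1 a b) : a = u ∧ b = v := by
  have habE : Dominates E a b := hab.mono (hsep.eUnion ▸ Finset.subset_union_left)
  obtain ⟨ha1, hb1⟩ := hab.mem_of_forall_edge (V := (V1 : Set α)) hsep.mem1
  rcases hsep.eq_or_eq_of_mem_of_mem ha1 ha with rfl | rfl <;>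
    rcases hsep.eq_or_eq_of_mem_of_mem hb1 hb with rfl | rfl
  · exact absurd habE (hacyc _)
  · exact ⟨rfl, rfl⟩
  · exact absurd (hdom.trans habE) (hacyc _)
  · exact absurd habE (hacyc _)

theorem dominates_iff (hsep : Separation V E u v V1 V2 E1 E2)
    (hacyc : ∀ x : α, ¬ Dominates E x x) (hdom : Dominates E u v) {H : Finset (α × α)}
    (hE2H : E2 ⊆ H) (hH : H ⊆ insert (u, v) E2) (hmarker : (∃ e ∈ E1, e.2 = v) → (u, v) ∈ H)
    {x y : α} (hx : x ∈ V2) (hy : y ∈ V2) :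
    Dominates H x y ↔ Dominates E x y := by
  constructor
  · refine Dominates.of_forall_edge fun a b hab => ?_
    rcases Finset.mem_insert.mp (hH hab) with heq | hab
    · obtain ⟨rfl, rfl⟩ := Prod.mk.inj heq
      exact hdom
    · exact .single (hsep.mem_union_iff.mpr (Or.inr hab))
  · intro h
    have hsplit := Relation.TransGen.of_sup_segments (r := fun a b => (a, b) ∈ E1)
      (P := (· ∈ V2)) (fun a b hab => hsep.mem2 (a, b) hab) hx hy
      (Relation.TransGen.mono (fun a b hab => hsep.mem_union_iff.mp hab) _ _ h)
    refine Relation.TransGen.mono (fun a b hab => ?_) _ _ hsplit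
    rcases hab with hab | ⟨ha, hb, hab⟩
    · exact hE2H hab
    · obtain ⟨rfl, rfl⟩ := hsep.eq_of_dominates_left_edges hacyc hdom ha hb hab
      exact hmarker (Dominates.exists_edge_into hab)

end Separation

/-- If `G` is acyclic and `u` dominates `v` in `G`, then dominance on `V2` is
the same in `H2*` as in `G`, where `H2* = (V2, E2 ∪ {(u, v)})` if `v` has an
incoming edge in `E1` and `H2* = (V2, E2)` otherwise. -/
theorem stmt7 {α : Type*} [DecidableEq α] (V V1 V2 : Finset α)
    (E E1 E2 : Finset (α × α)) (u v : α)
    (hsep : Separation V E u v V1 V2 E1 E2)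
    (hacyc : ∀ x : α, ¬ Dominates E x x)
    (hdom : Dominates E u v) :
    ((∃ e ∈ E1, e.2 = v) →
      ∀ x ∈ V2, ∀ y ∈ V2, (Dominates (insert (u, v) E2) x y ↔ Dominates E x y)) ∧
    (¬ (∃ e ∈ E1, e.2 = v) →
      ∀ x ∈ V2, ∀ y ∈ V2, (Dominates E2 x y ↔ Dominates E x y)) :=
  ⟨fun _ _ hx _ hy => hsep.dominates_iff hacyc hdom (Finset.subset_insert _ _) le_rfl
      (fun _ => Finset.mem_insert_self _ _) hx hy,
    fun hno _ hx _ hy => hsep.dominates_iff hacyc hdom le_rfl (Finset.subset_insert _ _)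
      (fun h => absurd h hno) hx hy⟩
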